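/- The map sending a binary c-tree to its unordered labeled dependency projection is many-to-one as soon as some head has at least two modifiers: if D is a labeled d-tree on {1,…,L} in which some position h has |M_h| ≥ 2, then there exist at least two distinct binary c-trees (with any fixed POS assignment and with proper-node labels in Σ) whose head projection, forgetting the order, equals D. -/

import Mathlib

/-- A node of a constituent tree: either a pre-terminal over position `i`
(standing for the pre-terminal `(p_i, i, {i})` together with its leaf child `i`),
or a proper node `node Z h cs` with label `Z`, lexical head `h` and children `cs`. -/
inductive CNode (L : ℕ) (Sg : Type) : Type where
  | pre  : Fin L → CNode L Sg
  | node : Sg → Fin L → List (CNode L Sg) → CNode L Sg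

namespace CNode

variable {L : ℕ} {Sg : Type}

/-- The lexical head of a node. -/
def head : CNode L Sg → Fin L
  | pre i => i
  | node _ h _ => h

mutual
  /-- The yield of a node. -/
  def yield : CNode L Sg → Finset (Fin L)
    | pre i => {i}
    | node _ _ cs => yieldList cs
  def yieldList : List (CNode L Sg) → Finset (Fin L)
    | [] => ∅
    | c :: cs => yield c ∪ yieldList cs
end

mutual
  /-- The list of all subtrees (nodes) of a tree, including itself. -/
  def subs : CNode L Sg → List (CNode L Sg)
    | pre i => [pre i]
    | node Z h cs => node Z h cs :: subsList cs
  def subsList : List (CNode L Sg) → List (CNode L Sg)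
    | [] => []
    | c :: cs => subs c ++ subsList cs
end

/-- Well-formedness of a c-tree: children have pairwise disjoint yields and
every proper node has exactly one child whose head is the node's head. -/
inductive Valid : CNode L Sg → Prop where
  | pre (i : Fin L) : Valid (pre i)
  | node (Z : Sg) (h : Fin L) (cs : List (CNode L Sg)) :
      (∀ c ∈ cs, Valid c) →
      cs.Pairwise (fun a b => Disjoint a.yield b.yield) →
      (∃! c, c ∈ cs ∧ head c = h) →
      Valid (node Z h cs)

/-- A c-tree on positions `1,…,L`: a well-formed tree whose leaves are exactly
the `L` positions, each appearing exactly once. -/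
def IsCTree (t : CNode L Sg) : Prop := Valid t ∧ t.yield = Finset.univ

/-- Every proper node has exactly two children. -/
def Binary (t : CNode L Sg) : Prop :=
  ∀ s ∈ t.subs, ∀ Z h cs, s = node Z h cs → cs.length = 2

/-- No proper node has exactly one child. -/
def Unaryless (t : CNode L Sg) : Prop :=
  ∀ s ∈ t.subs, ∀ Z h cs, s = node Z h cs → cs.length ≠ 1

/-- Every node's yield is an interval of consecutive positions. -/
def Continuous (t : CNode L Sg) : Prop :=
  ∀ s ∈ t.subs, ∃ a b : Fin L, s.yield = Finset.Icc a b

/-- `AttachesAt C h m Z n`: `n` is a proper node of `C` with label `Z` and lexical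
head `h`, having a (non-head) child whose lexical head is `m ≠ h`;
i.e. the modifier `m` attaches to `h` at the spine node `n`, generating an arc
`(h, m)` labeled `Z`. -/
def AttachesAt (C : CNode L Sg) (h m : Fin L) (Z : Sg) (n : CNode L Sg) : Prop :=
  n ∈ C.subs ∧ ∃ cs, n = node Z h cs ∧ m ≠ h ∧ ∃ c ∈ cs, head c = m

/-- A proper node with head `h` having at least one non-head child
(i.e. a node of `h`'s spine at which some modifier attaches). -/
def attachB (h : Fin L) : CNode L Sg → Bool
  | pre _ => false
  | node _ h' cs => h' = h && cs.any (fun c => head c != h)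

/-- The position, counted from the bottom of the spine of `h`, of the spine node `n`:
the number of proper nodes with head `h` lying weakly below `n` at which modifiers
attach.  This is the order index (`#1, #2, …`) of the attachment event at `n`. -/
def spineIdx (h : Fin L) (n : CNode L Sg) : ℕ :=
  n.subs.countP (attachB h)

end CNode

/-- A labeled (unordered) dependency tree on positions `{1,…,L}` with arc labels in
`Sg`: `par m = some (h, ℓ)` means there is an arc from head `h` to modifier `m`
carrying label `ℓ`; every vertex is reachable from the root. -/
structure LDTree (L : ℕ) (Sg : Type) : Type where
  root : Fin L
  par : Fin L → Option (Fin L × Sg)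
  root_par : par root = none
  reach : ∀ v : Fin L, Relation.ReflTransGen (fun a b => (par b).map Prod.fst = some a) root v

/-- `D` is the (unordered) head projection of the c-tree `C`: `D` has an arc `(h,m)`
labeled `Z` exactly when some proper node of `C` with label `Z` and head `h` has a
non-head child headed `m`. -/
def IsUProjection {L : ℕ} {Sg : Type} (C : CNode L Sg) (D : LDTree L Sg) : Prop :=
  ∀ (h m : Fin L) (ℓ : Sg),
    D.par m = some (h, ℓ) ↔ ∃ n : CNode L Sg, CNode.AttachesAt C h m ℓ n

/-! Fix, for every head `v`, an order of its outgoing arcs, and build the binary c-tree in which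
the spine of `v` branches to the left: starting from the pre-terminal of `v`, the subtrees of
the modifiers of `v` are attached one at a time, each by a new node labeled with its arc.
Every such tree projects onto `D`, and the orders can be read back off the tree, so two orders
that put different arcs of `h` first give two different trees. -/

namespace CNode

variable {L : ℕ} {Sg : Type}

def HasArc (t : CNode L Sg) (h m : Fin L) (ℓ : Sg) : Prop := ∃ n, t.AttachesAt h m ℓ n

theorem yield_pair (Z : Sg) (v : Fin L) (a b : CNode L Sg) :
    (node Z v [a, b]).yield = a.yield ∪ b.yield := by
  simp [yield, yieldList]

theorem subs_pair (Z : Sg) (v : Fin L) (a b : CNode L Sg) :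
    (node Z v [a, b]).subs = node Z v [a, b] :: (a.subs ++ b.subs) := by
  simp [subs, subsList]

theorem Valid.pair {Z : Sg} {v : Fin L} {a b : CNode L Sg} (ha : a.Valid) (hb : b.Valid)
    (hab : Disjoint a.yield b.yield) (hav : a.head = v) (hbv : b.head ≠ v) :
    (CNode.node Z v [a, b]).Valid := by
  refine .node _ _ _ (by simp [ha, hb]) (by simpa using hab) ⟨a, ⟨by simp, hav⟩, ?_⟩
  rintro c ⟨hc, rfl⟩
  simp only [List.mem_cons, List.not_mem_nil, or_false] at hc
  rcases hc with rfl | rfl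
  · rfl
  · exact absurd rfl hbv

theorem binary_pre (i : Fin L) : (pre i : CNode L Sg).Binary := by
  simp [Binary, subs]

theorem Binary.pair {Z : Sg} {v : Fin L} {a b : CNode L Sg} (ha : a.Binary) (hb : b.Binary) :
    (CNode.node Z v [a, b]).Binary := by
  intro s hs Z' h' cs hs'
  rw [subs_pair, List.mem_cons, List.mem_append] at hs
  rcases hs with rfl | hs | hs
  · cases hs'; rfl
  · exact ha s hs Z' h' cs hs'
  · exact hb s hs Z' h' cs hs'

theorem not_hasArc_pre (i h m : Fin L) (ℓ : Sg) : ¬ (pre i).HasArc h m ℓ := by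
  rintro ⟨n, hn, cs, rfl, -⟩
  simp [subs] at hn

theorem hasArc_pair {Z : Sg} {v : Fin L} {a b : CNode L Sg} {h m : Fin L} {ℓ : Sg} :
    (node Z v [a, b]).HasArc h m ℓ ↔
      (h = v ∧ ℓ = Z ∧ m ≠ v ∧ (a.head = m ∨ b.head = m)) ∨
        a.HasArc h m ℓ ∨ b.HasArc h m ℓ := by
  simp only [HasArc, AttachesAt, subs_pair, List.mem_cons, List.mem_append]
  constructor
  · rintro ⟨n, hn, cs, rfl, hmh, c, hc, rfl⟩
    rcases hn with hn | hn | hn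
    · obtain ⟨rfl, rfl, rfl⟩ := node.inj hn
      simp only [List.mem_cons, List.not_mem_nil, or_false] at hc
      exact .inl ⟨rfl, rfl, hmh, by rcases hc with rfl | rfl <;> simp⟩
    · exact .inr (.inl ⟨_, hn, cs, rfl, hmh, c, hc, rfl⟩)
    · exact .inr (.inr ⟨_, hn, cs, rfl, hmh, c, hc, rfl⟩)
  · rintro (⟨rfl, rfl, hmv, hab⟩ | ⟨n, hn, rest⟩ | ⟨n, hn, rest⟩)
    · exact ⟨_, .inl rfl, _, rfl, hmv, by simpa [eq_comm] using hab⟩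
    · exact ⟨n, .inr (.inl hn), rest⟩
    · exact ⟨n, .inr (.inr hn), rest⟩

def spine (v : Fin L) (g : Fin L → CNode L Sg) : List (Fin L × Sg) → CNode L Sg
  | [] => pre v
  | a :: l => node a.2 v [spine v g l, g a.1]

variable {v : Fin L} {g : Fin L → CNode L Sg}

theorem head_spine (l : List (Fin L × Sg)) : (spine v g l).head = v := by
  cases l <;> rfl

theorem mem_yield_spine {l : List (Fin L × Sg)} {u : Fin L} :
    u ∈ (spine v g l).yield ↔ u = v ∨ ∃ a ∈ l, u ∈ (g a.1).yield := by
  induction l with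
  | nil => simp [spine, yield]
  | cons a l ih => simp only [spine, yield_pair, Finset.mem_union, ih, List.mem_cons]; aesop

theorem binary_spine {l : List (Fin L × Sg)} (hg : ∀ a ∈ l, (g a.1).Binary) :
    (spine v g l).Binary := by
  induction l with
  | nil => exact binary_pre v
  | cons a l ih => exact .pair (ih fun b hb => hg b (.tail _ hb)) (hg a (.head _))

theorem valid_spine {l : List (Fin L × Sg)}
    (hg : ∀ a ∈ l, (g a.1).Valid ∧ (g a.1).head ≠ v ∧ v ∉ (g a.1).yield)
    (hl : l.Pairwise fun a b => Disjoint (g a.1).yield (g b.1).yield) :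
    (spine v g l).Valid := by
  induction l with
  | nil => exact .pre v
  | cons a l ih =>
    rw [List.pairwise_cons] at hl
    obtain ⟨hva, hha, hya⟩ := hg a (.head _)
    refine .pair (ih (fun b hb => hg b (.tail _ hb)) hl.2) hva ?_ (head_spine l) hha
    rw [Finset.disjoint_left]
    intro u hu hua
    rcases mem_yield_spine.1 hu with rfl | ⟨b, hb, hub⟩
    · exact hya hua
    · exact Finset.disjoint_left.1 (hl.1 b hb) hua hub

theorem hasArc_spine {l : List (Fin L × Sg)} (hg : ∀ a ∈ l, (g a.1).head = a.1)
    {h m : Fin L} {ℓ : Sg} :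
    (spine v g l).HasArc h m ℓ ↔
      (h = v ∧ m ≠ v ∧ (m, ℓ) ∈ l) ∨ ∃ a ∈ l, (g a.1).HasArc h m ℓ := by
  induction l with
  | nil => simp [spine, not_hasArc_pre]
  | cons a l ih =>
    rw [spine, hasArc_pair, ih fun b hb => hg b (.tail _ hb), head_spine, hg a (.head _)]
    simp only [List.mem_cons, Prod.ext_iff]
    grind

theorem eq_of_spine_eq {g' : Fin L → CNode L Sg} (hg : ∀ x, (g x).head = x)
    (hg' : ∀ x, (g' x).head = x) {l l' : List (Fin L × Sg)} (he : spine v g l = spine v g' l') :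
    l = l' ∧ ∀ a ∈ l, g a.1 = g' a.1 := by
  induction l generalizing l' with
  | nil => cases l' <;> simp_all [spine]
  | cons a l ih =>
    cases l' with
    | nil => simp [spine] at he
    | cons a' l' =>
      simp only [spine, node.injEq, List.cons.injEq, and_true, true_and] at he
      obtain ⟨hZ, hl, ha⟩ := he
      have ha1 : a.1 = a'.1 := by rw [← hg a.1, ← hg' a'.1, ha]
      obtain ⟨rfl, hrest⟩ := ih hl
      obtain rfl : a = a' := Prod.ext ha1 hZ
      exact ⟨rfl, by simpa [ha] using hrest⟩

end CNode

namespace LDTree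

open CNode Relation

variable {L : ℕ} {Sg : Type} (D : LDTree L Sg)

def IsParent (a b : Fin L) : Prop := (D.par b).map Prod.fst = some a

variable {D}

theorem isParent_iff {a b : Fin L} : D.IsParent a b ↔ ∃ ℓ, D.par b = some (a, ℓ) := by
  simp [IsParent, Option.map_eq_some_iff]

theorem IsParent.eq {a a' b : Fin L} (h : D.IsParent a b) (h' : D.IsParent a' b) : a = a' :=
  Option.some_injective _ (h.symm.trans h')

-- Walking up from `v` retraces in reverse the path from the root, which has no parent.
theorem acc_isParent (v : Fin L) : Acc D.IsParent v := by
  induction D.reach v with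
  | refl => exact ⟨_, fun a ha => by simp [IsParent, D.root_par] at ha⟩
  | tail _ hbc ih => exact ⟨_, fun a ha => ha.eq hbc ▸ ih⟩

theorem not_transGen_isParent_self (v : Fin L) : ¬ TransGen D.IsParent v v :=
  (WellFounded.transGen ⟨acc_isParent⟩).irrefl.irrefl v

variable (D) in
open Classical in
noncomputable def subtree (v : Fin L) : Finset (Fin L) := {u | ReflTransGen D.IsParent v u}

theorem mem_subtree {v u : Fin L} : u ∈ D.subtree v ↔ ReflTransGen D.IsParent v u := by
  simp [subtree]

theorem self_mem_subtree (v : Fin L) : v ∈ D.subtree v := mem_subtree.2 .refl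

theorem mem_subtree_iff_eq_or_mem_child {v u : Fin L} :
    u ∈ D.subtree v ↔ u = v ∨ ∃ c, D.IsParent v c ∧ u ∈ D.subtree c := by
  rw [mem_subtree, ReflTransGen.cases_head_iff, eq_comm]
  simp only [mem_subtree]

theorem subtree_root : D.subtree D.root = Finset.univ :=
  Finset.eq_univ_of_forall fun u => mem_subtree.2 (D.reach u)

theorem IsParent.not_mem_subtree {v c : Fin L} (h : D.IsParent v c) : v ∉ D.subtree c :=
  fun hv => not_transGen_isParent_self v (.head' h (mem_subtree.1 hv))

theorem IsParent.ne {v c : Fin L} (h : D.IsParent v c) : c ≠ v := by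
  rintro rfl
  exact h.not_mem_subtree (self_mem_subtree c)

theorem IsParent.card_subtree_lt {v c : Fin L} (h : D.IsParent v c) :
    (D.subtree c).card < (D.subtree v).card := by
  refine Finset.card_lt_card ((Finset.ssubset_iff_of_subset ?_).2 ⟨v, self_mem_subtree v,
    h.not_mem_subtree⟩)
  intro u hu
  exact mem_subtree.2 (.head h (mem_subtree.1 hu))

theorem disjoint_subtree {v a b : Fin L} (ha : D.IsParent v a) (hb : D.IsParent v b)
    (hab : a ≠ b) : Disjoint (D.subtree a) (D.subtree b) := by
  -- The ancestors of a common descendant form a chain, so one sibling would lie below the other.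
  have hsiblings {a b : Fin L} (ha : D.IsParent v a) (hb : D.IsParent v b)
      (hba : ReflTransGen D.IsParent b a) : a = b := by
    rcases ReflTransGen.cases_tail hba with rfl | ⟨c, hbc, hca⟩
    · rfl
    · cases hca.eq ha
      exact absurd (.head' hb hbc) (not_transGen_isParent_self v)
  rw [Finset.disjoint_left]
  intro u hua hub
  have hunique : Relator.RightUnique (Function.swap D.IsParent) := fun _ _ _ h h' => h.eq h'
  rcases (reflTransGen_swap.2 (mem_subtree.1 hua)).total_of_right_unique hunique
      (reflTransGen_swap.2 (mem_subtree.1 hub)) with hba | hab'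
  · exact hab (hsiblings ha hb (reflTransGen_swap.1 hba))
  · exact hab (hsiblings hb ha (reflTransGen_swap.1 hab')).symm

theorem card_subtree_pos (v : Fin L) : 0 < (D.subtree v).card :=
  Finset.card_pos.2 ⟨v, self_mem_subtree v⟩

theorem card_subtree_le (v : Fin L) : (D.subtree v).card ≤ L :=
  (Finset.card_le_univ _).trans_eq (Fintype.card_fin L)

variable (D) in
def IsArcOrder (ks : Fin L → List (Fin L × Sg)) : Prop :=
  ∀ v, (ks v).Nodup ∧ ∀ a, a ∈ ks v ↔ D.par a.1 = some (v, a.2)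

theorem exists_isArcOrder_cons [Fintype Sg] {h m : Fin L} {ℓ : Sg}
    (hpar : D.par m = some (h, ℓ)) : ∃ ks, D.IsArcOrder ks ∧ ∃ l, ks h = (m, ℓ) :: l := by
  classical
  let arcs (v : Fin L) : List (Fin L × Sg) := ({a | D.par a.1 = some (v, a.2)} : Finset _).toList
  have hmem : (m, ℓ) ∈ arcs h := by simp [arcs, hpar]
  refine ⟨Function.update arcs h ((m, ℓ) :: (arcs h).erase (m, ℓ)), fun v => ?_,
    (arcs h).erase (m, ℓ), by simp⟩
  have hperm : (Function.update arcs h ((m, ℓ) :: (arcs h).erase (m, ℓ)) v).Perm (arcs v) := by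
    rcases eq_or_ne v h with rfl | hv
    · simpa using (List.perm_cons_erase hmem).symm
    · simp [hv]
  exact ⟨hperm.nodup_iff.2 (Finset.nodup_toList _), fun a => by simp [hperm.mem_iff, arcs]⟩

variable {ks ks' : Fin L → List (Fin L × Sg)}

theorem IsArcOrder.isParent (hks : D.IsArcOrder ks) {v : Fin L} {a : Fin L × Sg}
    (ha : a ∈ ks v) : D.IsParent v a.1 :=
  isParent_iff.2 ⟨a.2, ((hks v).2 a).1 ha⟩

theorem IsArcOrder.exists_mem (hks : D.IsArcOrder ks) {v c : Fin L} (hc : D.IsParent v c) :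
    ∃ ℓ, (c, ℓ) ∈ ks v := by
  obtain ⟨ℓ, hℓ⟩ := isParent_iff.1 hc
  exact ⟨ℓ, ((hks v).2 (c, ℓ)).2 hℓ⟩

theorem IsArcOrder.pairwise_fst_ne (hks : D.IsArcOrder ks) (v : Fin L) :
    (ks v).Pairwise fun a b => a.1 ≠ b.1 := by
  refine (hks v).1.imp_of_mem fun ha hb hab heq => hab (Prod.ext heq ?_)
  have h := ((hks v).2 _).1 ha
  rw [heq, ((hks v).2 _).1 hb] at h
  exact (Prod.mk.inj (Option.some_injective _ h)).2.symm

theorem IsArcOrder.card_subtree_le (hks : D.IsArcOrder ks) {n : ℕ} {v : Fin L}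
    (hn : (D.subtree v).card ≤ n + 1) {a : Fin L × Sg} (ha : a ∈ ks v) :
    (D.subtree a.1).card ≤ n := by
  have := (hks.isParent ha).card_subtree_lt
  omega

/-- `n` is recursion fuel; it suffices once `(D.subtree v).card ≤ n`. -/
def build (ks : Fin L → List (Fin L × Sg)) : ℕ → Fin L → CNode L Sg
  | 0, v => pre v
  | n + 1, v => spine v (build ks n) (ks v)

theorem head_build (ks : Fin L → List (Fin L × Sg)) (n : ℕ) (v : Fin L) :
    (build ks n v).head = v := by
  cases n
  · rfl
  · exact head_spine _

theorem binary_build (ks : Fin L → List (Fin L × Sg)) (n : ℕ) (v : Fin L) :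
    (build ks n v).Binary := by
  induction n generalizing v with
  | zero => exact binary_pre v
  | succ n ih => exact binary_spine fun a _ => ih a.1

theorem yield_build (hks : D.IsArcOrder ks) {n : ℕ} {v : Fin L}
    (hn : (D.subtree v).card ≤ n) : (build ks n v).yield = D.subtree v := by
  induction n generalizing v with
  | zero => exact absurd hn (card_subtree_pos v).not_ge
  | succ n ih =>
    ext u
    rw [build, mem_yield_spine, mem_subtree_iff_eq_or_mem_child]
    refine or_congr Iff.rfl ⟨?_, ?_⟩
    · rintro ⟨a, ha, hu⟩
      exact ⟨a.1, hks.isParent ha, ih (hks.card_subtree_le hn ha) ▸ hu⟩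
    · rintro ⟨c, hc, hu⟩
      obtain ⟨ℓ, hcℓ⟩ := hks.exists_mem hc
      exact ⟨(c, ℓ), hcℓ, (ih (hks.card_subtree_le hn hcℓ)).symm ▸ hu⟩

theorem valid_build (hks : D.IsArcOrder ks) {n : ℕ} {v : Fin L}
    (hn : (D.subtree v).card ≤ n) : (build ks n v).Valid := by
  induction n generalizing v with
  | zero => exact absurd hn (card_subtree_pos v).not_ge
  | succ n ih =>
    refine valid_spine (fun a ha => ?_) ((hks.pairwise_fst_ne v).imp_of_mem fun ha hb hab => ?_)
    · have hva := hks.isParent ha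
      rw [yield_build hks (hks.card_subtree_le hn ha), head_build]
      exact ⟨ih (hks.card_subtree_le hn ha), hva.ne, hva.not_mem_subtree⟩
    · rw [yield_build hks (hks.card_subtree_le hn ha),
        yield_build hks (hks.card_subtree_le hn hb)]
      exact disjoint_subtree (hks.isParent ha) (hks.isParent hb) hab

theorem hasArc_build (hks : D.IsArcOrder ks) {n : ℕ} {v : Fin L}
    (hn : (D.subtree v).card ≤ n) {h m : Fin L} {ℓ : Sg} :
    (build ks n v).HasArc h m ℓ ↔ h ∈ D.subtree v ∧ D.par m = some (h, ℓ) := by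
  induction n generalizing v with
  | zero => exact absurd hn (card_subtree_pos v).not_ge
  | succ n ih =>
    rw [build, hasArc_spine fun a _ => head_build ks n a.1, mem_subtree_iff_eq_or_mem_child]
    constructor
    · rintro (⟨rfl, -, hm⟩ | ⟨a, ha, harc⟩)
      · exact ⟨.inl rfl, ((hks h).2 _).1 hm⟩
      · obtain ⟨hh, hpar⟩ := (ih (hks.card_subtree_le hn ha)).1 harc
        exact ⟨.inr ⟨a.1, hks.isParent ha, hh⟩, hpar⟩
    · rintro ⟨rfl | ⟨c, hc, hh⟩, hpar⟩
      · exact .inl ⟨rfl, (isParent_iff.2 ⟨ℓ, hpar⟩).ne, ((hks h).2 (m, ℓ)).2 hpar⟩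
      · obtain ⟨ℓ', hcℓ'⟩ := hks.exists_mem hc
        exact .inr ⟨_, hcℓ', (ih (hks.card_subtree_le hn hcℓ')).2 ⟨hh, hpar⟩⟩

theorem eq_of_build_eq (hks : D.IsArcOrder ks) {n : ℕ} {v : Fin L}
    (hn : (D.subtree v).card ≤ n) (he : build ks n v = build ks' n v) :
    ∀ u ∈ D.subtree v, ks u = ks' u := by
  induction n generalizing v with
  | zero => exact absurd hn (card_subtree_pos v).not_ge
  | succ n ih =>
    obtain ⟨hkv, hchildren⟩ := eq_of_spine_eq (head_build ks n) (head_build ks' n) he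
    intro u hu
    rcases mem_subtree_iff_eq_or_mem_child.1 hu with rfl | ⟨c, hc, hu⟩
    · exact hkv
    · obtain ⟨ℓ, hcℓ⟩ := hks.exists_mem hc
      exact ih (hks.card_subtree_le hn hcℓ) (hchildren _ hcℓ) u hu

theorem isCTree_build (hks : D.IsArcOrder ks) : (build ks L D.root).IsCTree :=
  ⟨valid_build hks (card_subtree_le _),
    by rw [yield_build hks (card_subtree_le _), subtree_root]⟩

theorem isUProjection_build (hks : D.IsArcOrder ks) : IsUProjection (build ks L D.root) D :=
  fun _ _ _ => by
    rw [← HasArc, hasArc_build hks (card_subtree_le _), subtree_root]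
    simp

end LDTree

/-- The map sending a binary c-tree to its unordered labeled
dependency projection is many-to-one as soon as some head has at least two
modifiers: if `D` is a labeled d-tree on `{1,…,L}` in which some position `h` has
at least two modifiers, then there exist at least two distinct binary c-trees
(with the fixed POS assignment `pos` and proper-node labels in `Sg`) whose head
projection, forgetting the order, equals `D`. -/
theorem stmt10 (L : ℕ) (Sg P : Type) [Fintype Sg] (pos : Fin L → P)
    (D : LDTree L Sg) (h : Fin L) (m₁ m₂ : Fin L) (hne : m₁ ≠ m₂)
    (h1 : (D.par m₁).map Prod.fst = some h) (h2 : (D.par m₂).map Prod.fst = some h) :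
    ∃ C₁ C₂ : CNode L Sg, C₁ ≠ C₂ ∧
      (CNode.IsCTree C₁ ∧ CNode.Binary C₁ ∧ IsUProjection C₁ D) ∧
      (CNode.IsCTree C₂ ∧ CNode.Binary C₂ ∧ IsUProjection C₂ D) := by
  obtain ⟨ℓ₁, hpar₁⟩ := LDTree.isParent_iff.1 h1
  obtain ⟨ℓ₂, hpar₂⟩ := LDTree.isParent_iff.1 h2
  obtain ⟨ks₁, hks₁, l₁, hl₁⟩ := LDTree.exists_isArcOrder_cons hpar₁
  obtain ⟨ks₂, hks₂, l₂, hl₂⟩ := LDTree.exists_isArcOrder_cons hpar₂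
  refine ⟨LDTree.build ks₁ L D.root, LDTree.build ks₂ L D.root, fun he => hne ?_,
    ⟨LDTree.isCTree_build hks₁, LDTree.binary_build _ _ _, LDTree.isUProjection_build hks₁⟩,
    ⟨LDTree.isCTree_build hks₂, LDTree.binary_build _ _ _, LDTree.isUProjection_build hks₂⟩⟩
  have hks : ks₁ h = ks₂ h := LDTree.eq_of_build_eq hks₁ (LDTree.card_subtree_le _) he h
    (LDTree.subtree_root ▸ Finset.mem_univ h)
  rw [hl₁, hl₂, List.cons.injEq, Prod.mk.injEq] at hks
  exact hks.1.1
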